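/- arXiv:2505.20356 — 3 statements merged into one kernel-verified Lean document; each statement's English description precedes it below -/
import Mathlib

section
/- In the linear assembly language with program-counter semantics, concatenation of two jump-free programs P1 and P2 is semantically the composition of their effects: running P1 ++ P2 from state σ terminates in state ⟦P2⟧(⟦P1⟧(σ)), where ⟦P⟧ denotes the straight-line effect of the jump-free program P. (Part rebuild for basic blocks: assembling two adjacent translated blocks is just concatenation.) -/
/-- Instructions of a linear (labeled) assembly language. -/
inductive Instr (State Label : Type*) where
  | exec (f : State → State) : Instr State Label
  | jmp (l : Label) : Instr State Label
  | cjmp (c : State → Bool) (l : Label) : Instr State Label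
  | label (l : Label) : Instr State Label

/-- Small-step semantics with a program counter on configurations
`(pc, σ)`: `exec` applies its function and increments the counter, `label`
is a no-op, jumps move the counter to a position holding `label l`. -/
inductive Step {State Label : Type*} (P : List (Instr State Label)) :
    ℕ × State → ℕ × State → Prop where
  | exec {pc σ f} : P[pc]? = some (.exec f) → Step P (pc, σ) (pc + 1, f σ)
  | label {pc σ l} : P[pc]? = some (.label l) → Step P (pc, σ) (pc + 1, σ)
  | jmp {pc pc' σ l} : P[pc]? = some (.jmp l) →
      P[pc']? = some (.label l) → Step P (pc, σ) (pc', σ)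
  | cjmpTrue {pc pc' σ c l} : P[pc]? = some (.cjmp c l) → c σ = true →
      P[pc']? = some (.label l) → Step P (pc, σ) (pc', σ)
  | cjmpFalse {pc σ c l} : P[pc]? = some (.cjmp c l) → c σ = false →
      Step P (pc, σ) (pc + 1, σ)

/-- Execution of a whole program: start at counter `0`, terminate when the
counter reaches the program length. -/
def Runs {State Label : Type*} (P : List (Instr State Label))
    (σ σ' : State) : Prop :=
  Relation.ReflTransGen (Step P) (0, σ) (P.length, σ')

/-- A program is jump-free if it contains no `jmp` or `cjmp` instruction. -/
def JumpFree {State Label : Type*} (P : List (Instr State Label)) : Prop :=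
  ∀ i ∈ P, match i with
    | .jmp _ => False
    | .cjmp _ _ => False
    | _ => True

/-- Straight-line effect of a program: the composition, in order, of all its
`exec` functions. -/
def effect {State Label : Type*} (P : List (Instr State Label)) :
    State → State :=
  P.foldl (fun g i => match i with | .exec f => f ∘ g | _ => g) id

/-!
Steps of a program remain steps of any extension of it, so a run of a jump-free program `P`
followed by one step on the appended instruction `i` is a run of `P ++ [i]`. Induction from the
right shows that every jump-free program runs to its effect, and `effect` turns concatenation
into composition.
-/

section

variable {State Label : Type*}

namespace Instr

def denote : Instr State Label → State → State
  | exec f => f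
  | _ => id

end Instr

theorem effect_append_singleton (P : List (Instr State Label)) (i : Instr State Label) :
    effect (P ++ [i]) = i.denote ∘ effect P := by
  cases i <;> simp [effect, Instr.denote]

theorem effect_append (P Q : List (Instr State Label)) :
    effect (P ++ Q) = effect Q ∘ effect P := by
  induction Q using List.reverseRecOn with
  | nil => rw [List.append_nil]; rfl
  | append_singleton Q i ih =>
    rw [← List.append_assoc, effect_append_singleton, effect_append_singleton, ih,
      Function.comp_assoc]

theorem jumpFree_append {P Q : List (Instr State Label)} :
    JumpFree (P ++ Q) ↔ JumpFree P ∧ JumpFree Q :=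
  List.forall_mem_append

theorem Step.append_right {P Q : List (Instr State Label)} {c c' : ℕ × State}
    (h : Step P c c') : Step (P ++ Q) c c' := by
  have lift {pc : ℕ} {i : Instr State Label} (hi : P[pc]? = some i) :
      (P ++ Q)[pc]? = some i := by
    rw [List.getElem?_append_left (List.getElem?_eq_some_iff.1 hi).1, hi]
  cases h with
  | exec h => exact .exec (lift h)
  | label h => exact .label (lift h)
  | jmp h h' => exact .jmp (lift h) (lift h')
  | cjmpTrue h hc h' => exact .cjmpTrue (lift h) hc (lift h')
  | cjmpFalse h hc => exact .cjmpFalse (lift h) hc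

theorem step_append_singleton (P : List (Instr State Label)) {i : Instr State Label}
    (hi : JumpFree [i]) (σ : State) :
    Step (P ++ [i]) (P.length, σ) (P.length + 1, i.denote σ) := by
  cases i with
  | exec f => exact .exec (f := f) (by simp)
  | label l => exact .label (l := l) (by simp)
  | jmp l => exact (hi _ (List.mem_singleton_self _)).elim
  | cjmp c l => exact (hi _ (List.mem_singleton_self _)).elim

theorem JumpFree.runs {P : List (Instr State Label)} (h : JumpFree P) (σ : State) :
    Runs P σ (effect P σ) := by
  induction P using List.reverseRecOn with
  | nil => exact .refl
  | append_singleton P i ih =>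
    obtain ⟨hP, hi⟩ := jumpFree_append.1 h
    rw [Runs, effect_append_singleton, List.length_append, List.length_singleton]
    exact ((ih hP).lift id fun _ _ => Step.append_right).tail
      (step_append_singleton P hi (effect P σ))

end

/-- concatenation of two jump-free programs is semantically the
composition of their effects: running `P₁ ++ P₂` from `σ` terminates in
`⟦P₂⟧ (⟦P₁⟧ σ)`.  (Part rebuild for basic blocks is just concatenation.) -/
theorem jumpFree_append_runs {State Label : Type*}
    (P₁ P₂ : List (Instr State Label))
    (h₁ : JumpFree P₁) (h₂ : JumpFree P₂) (σ : State) :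
    Runs (P₁ ++ P₂) σ (effect P₂ (effect P₁ σ)) := by
  rw [← Function.comp_apply (f := effect P₂), ← effect_append]
  exact (jumpFree_append.2 ⟨h₁, h₂⟩).runs σ
end

section
/- Define a compiler C from the WHILE language to the labeled assembly language: C(skip) = [], C(assign f) = [exec f], C(seq s1 s2) = C(s1) ++ C(s2), C(ite c s1 s2) = [cjmp (¬c) l_else] ++ C(s1) ++ [jmp l_end, label l_else] ++ C(s2) ++ [label l_end] (with fresh labels), and C(while c s) = [label l_start, cjmp (¬c) l_end] ++ C(s) ++ [jmp l_start, label l_end] (with fresh labels). Then C is correct for terminating programs: if (s, σ) ⇓ σ' in the big-step semantics, then executing C(s) (embedded at any position of a larger program, with its labels fresh) starting at its first instruction in state σ reaches the instruction following C(s) in state σ'. -/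
/-- A small imperative (WHILE) language over an arbitrary state type. -/
inductive Stmt (State : Type*) where
  | skip : Stmt State
  | assign (update : State → State) : Stmt State
  | seq (s₁ s₂ : Stmt State) : Stmt State
  | ite (cond : State → Bool) (s₁ s₂ : Stmt State) : Stmt State
  | whileLoop (cond : State → Bool) (s : Stmt State) : Stmt State

/-- Standard big-step operational semantics `(s, σ) ⇓ σ'`. -/
inductive BigStep {State : Type*} : Stmt State → State → State → Prop where
  | skip {σ} : BigStep .skip σ σ
  | assign {f σ} : BigStep (.assign f) σ (f σ)
  | seq {s₁ s₂ σ σ' σ''} :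
      BigStep s₁ σ σ' → BigStep s₂ σ' σ'' → BigStep (.seq s₁ s₂) σ σ''
  | iteTrue {c s₁ s₂ σ σ'} :
      c σ = true → BigStep s₁ σ σ' → BigStep (.ite c s₁ s₂) σ σ'
  | iteFalse {c s₁ s₂ σ σ'} :
      c σ = false → BigStep s₂ σ σ' → BigStep (.ite c s₁ s₂) σ σ'
  | whileTrue {c s σ σ' σ''} :
      c σ = true → BigStep s σ σ' → BigStep (.whileLoop c s) σ' σ'' →
      BigStep (.whileLoop c s) σ σ''
  | whileFalse {c s σ} :
      c σ = false → BigStep (.whileLoop c s) σ σ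

/-- Labels occurring as `label` instructions in a program. -/
def labelsOf {State Label : Type*} (P : List (Instr State Label)) :
    List Label :=
  P.filterMap (fun i => match i with | .label l => some l | _ => none)

/-- The compiler from the WHILE language to labeled assembly, threading a
fresh-label counter.  `compile s n = (code, n')`: the generated code uses
fresh labels in `[n, n')`. -/
def compile {State : Type*} : Stmt State → ℕ → List (Instr State ℕ) × ℕ
  | .skip, n => ([], n)
  | .assign f, n => ([.exec f], n)
  | .seq s₁ s₂, n =>
      let r₁ := compile s₁ n
      let r₂ := compile s₂ r₁.2
      (r₁.1 ++ r₂.1, r₂.2)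
  | .ite c s₁ s₂, n =>
      let lelse := n
      let lend := n + 1
      let r₁ := compile s₁ (n + 2)
      let r₂ := compile s₂ r₁.2
      ([.cjmp (fun σ => !c σ) lelse] ++ r₁.1 ++
        [.jmp lend, .label lelse] ++ r₂.1 ++ [.label lend], r₂.2)
  | .whileLoop c s, n =>
      let lstart := n
      let lend := n + 1
      let r := compile s (n + 2)
      ([.label lstart, .cjmp (fun σ => !c σ) lend] ++ r.1 ++
        [.jmp lstart, .label lend], r.2)


/-! Induction on the big-step derivation, generalised over the label counter and over where the
code sits in the host program. The code of `ite` and `whileLoop` is a fixed pattern of jumps around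
the code of the substatements, and each jump can land on the `label` instruction generated with it,
so every case is a short explicit run spliced with the runs of the substatements; a loop iteration
returns to the loop's first instruction. -/

open Relation

section CodeAt

variable {α : Type*}

def CodeAt (P : List α) (k : ℕ) (C : List α) : Prop :=
  ∀ i x, C[i]? = some x → P[k + i]? = some x

theorem codeAt_append {P C₁ C₂ : List α} {k : ℕ} :
    CodeAt P k (C₁ ++ C₂) ↔ CodeAt P k C₁ ∧ CodeAt P (k + C₁.length) C₂ := by
  refine ⟨fun h => ⟨fun i x hx => h i x ?_, fun i x hx => ?_⟩, fun ⟨h₁, h₂⟩ i x hx => ?_⟩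
  · rw [List.getElem?_append_left (List.getElem?_eq_some_iff.1 hx).1, hx]
  · rw [add_assoc]
    exact h _ x (by rwa [List.getElem?_append_right (by omega), Nat.add_sub_cancel_left])
  · rcases lt_or_ge i C₁.length with hi | hi
    · exact h₁ i x (by rwa [List.getElem?_append_left hi] at hx)
    · obtain ⟨j, rfl⟩ := Nat.exists_eq_add_of_le hi
      rw [← add_assoc]
      exact h₂ j x (by rwa [List.getElem?_append_right hi, Nat.add_sub_cancel_left] at hx)

theorem codeAt_cons {P C : List α} {k : ℕ} {a : α} :
    CodeAt P k (a :: C) ↔ P[k]? = some a ∧ CodeAt P (k + 1) C := by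
  rw [← List.singleton_append, codeAt_append]
  refine and_congr ⟨fun h => h 0 a rfl, fun h i x hx => ?_⟩ Iff.rfl
  obtain ⟨hi, rfl⟩ := List.getElem?_eq_some_iff.1 hx
  obtain rfl : i = 0 := by simpa using hi
  exact h

theorem codeAt_nil (P : List α) (k : ℕ) : CodeAt P k [] := by simp [CodeAt]

theorem codeAt_middle (Q C R : List α) : CodeAt (Q ++ C ++ R) Q.length C := fun i x hx => by
  rw [List.append_assoc, List.getElem?_append_right (by omega), Nat.add_sub_cancel_left,
    List.getElem?_append_left (List.getElem?_eq_some_iff.1 hx).1, hx]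

end CodeAt

section Patterns

variable {State Label : Type*}

def condCode (c : State → Bool) (lelse lend : Label) (C₁ C₂ : List (Instr State Label)) :
    List (Instr State Label) :=
  [.cjmp c lelse] ++ C₁ ++ [.jmp lend, .label lelse] ++ C₂ ++ [.label lend]

def loopCode (c : State → Bool) (lstart lend : Label) (C : List (Instr State Label)) :
    List (Instr State Label) :=
  [.label lstart, .cjmp c lend] ++ C ++ [.jmp lstart, .label lend]

theorem compile_ite (c : State → Bool) (s₁ s₂ : Stmt State) (n : ℕ) :
    (compile (.ite c s₁ s₂) n).1 = condCode (fun σ => !c σ) n (n + 1) (compile s₁ (n + 2)).1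
      (compile s₂ (compile s₁ (n + 2)).2).1 := rfl

theorem compile_whileLoop (c : State → Bool) (s : Stmt State) (n : ℕ) :
    (compile (.whileLoop c s) n).1 = loopCode (fun σ => !c σ) n (n + 1) (compile s (n + 2)).1 :=
  rfl

variable {P C C₁ C₂ : List (Instr State Label)} {k : ℕ} {c : State → Bool} {l₁ l₂ : Label}

theorem condCode_length : (condCode c l₁ l₂ C₁ C₂).length = C₁.length + C₂.length + 4 := by
  simp only [_root_.condCode, List.length_append, List.length_cons, List.length_nil]
  omega

theorem loopCode_length : (loopCode c l₁ l₂ C).length = C.length + 4 := by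
  simp only [_root_.loopCode, List.length_append, List.length_cons, List.length_nil]
  omega

theorem CodeAt.condCode (h : CodeAt P k (condCode c l₁ l₂ C₁ C₂)) :
    P[k]? = some (.cjmp c l₁) ∧ CodeAt P (k + 1) C₁ ∧
      P[k + 1 + C₁.length]? = some (.jmp l₂) ∧ P[k + 1 + C₁.length + 1]? = some (.label l₁) ∧
      CodeAt P (k + 1 + C₁.length + 2) C₂ ∧
      P[k + 1 + C₁.length + 2 + C₂.length]? = some (.label l₂) := by
  simp only [_root_.condCode, List.cons_append, List.nil_append, codeAt_cons, codeAt_append,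
    codeAt_nil, and_true, List.length_append, List.length_cons, List.length_nil] at h
  obtain ⟨hcjmp, ⟨⟨h₁, hjmp, hlelse⟩, h₂⟩, hlend⟩ := h
  exact ⟨hcjmp, h₁, hjmp, hlelse, h₂, by convert hlend using 2; omega⟩

theorem CodeAt.loopCode (h : CodeAt P k (loopCode c l₁ l₂ C)) :
    P[k]? = some (.label l₁) ∧ P[k + 1]? = some (.cjmp c l₂) ∧ CodeAt P (k + 2) C ∧
      P[k + 2 + C.length]? = some (.jmp l₁) ∧ P[k + 2 + C.length + 1]? = some (.label l₂) := by
  simp only [_root_.loopCode, List.cons_append, List.nil_append, codeAt_cons, codeAt_append,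
    codeAt_nil, and_true] at h
  exact h

variable {σ σ' : State}

theorem reflTransGen_condCode_then (hP : CodeAt P k (condCode c l₁ l₂ C₁ C₂))
    (hc : c σ = false) (h₁ : ReflTransGen (Step P) (k + 1, σ) (k + 1 + C₁.length, σ')) :
    ReflTransGen (Step P) (k, σ) (k + (condCode c l₁ l₂ C₁ C₂).length, σ') := by
  obtain ⟨hcjmp, -, hjmp, -, -, hlend⟩ := hP.condCode
  rw [condCode_length, show k + (C₁.length + C₂.length + 4) =
    k + 1 + C₁.length + 2 + C₂.length + 1 by omega]
  exact ((h₁.head (.cjmpFalse hcjmp hc)).tail (.jmp hjmp hlend)).tail (.label hlend)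

theorem reflTransGen_condCode_else (hP : CodeAt P k (condCode c l₁ l₂ C₁ C₂))
    (hc : c σ = true)
    (h₂ : ReflTransGen (Step P) (k + 1 + C₁.length + 2, σ)
      (k + 1 + C₁.length + 2 + C₂.length, σ')) :
    ReflTransGen (Step P) (k, σ) (k + (condCode c l₁ l₂ C₁ C₂).length, σ') := by
  obtain ⟨hcjmp, -, -, hlelse, -, hlend⟩ := hP.condCode
  rw [condCode_length, show k + (C₁.length + C₂.length + 4) =
    k + 1 + C₁.length + 2 + C₂.length + 1 by omega]
  exact ((h₂.head (.label hlelse)).head (.cjmpTrue hcjmp hc hlelse)).tail (.label hlend)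

theorem reflTransGen_loopCode_exit (hP : CodeAt P k (loopCode c l₁ l₂ C)) (hc : c σ = true) :
    ReflTransGen (Step P) (k, σ) (k + (loopCode c l₁ l₂ C).length, σ) := by
  obtain ⟨hstart, hcjmp, -, -, hlend⟩ := hP.loopCode
  rw [loopCode_length, show k + (C.length + 4) = k + 2 + C.length + 1 + 1 by omega]
  exact ((ReflTransGen.single (.label hstart)).tail (.cjmpTrue hcjmp hc hlend)).tail (.label hlend)

theorem reflTransGen_loopCode_iter (hP : CodeAt P k (loopCode c l₁ l₂ C)) (hc : c σ = false)
    (hbody : ReflTransGen (Step P) (k + 2, σ) (k + 2 + C.length, σ')) :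
    ReflTransGen (Step P) (k, σ) (k, σ') := by
  obtain ⟨hstart, hcjmp, -, hjmp, -⟩ := hP.loopCode
  exact ((hbody.head (.cjmpFalse hcjmp hc)).head (.label hstart)).tail (.jmp hjmp hstart)

end Patterns

theorem BigStep.reflTransGen_compile {State : Type*} {s : Stmt State} {σ σ' : State}
    (h : BigStep s σ σ') {n k : ℕ} {P : List (Instr State ℕ)} (hP : CodeAt P k (compile s n).1) :
    ReflTransGen (Step P) (k, σ) (k + (compile s n).1.length, σ') := by
  induction h generalizing n k with
  | skip => exact .refl
  | assign => exact .single (.exec (codeAt_cons.1 hP).1)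
  | seq _ _ ih₁ ih₂ =>
    obtain ⟨h₁, h₂⟩ := codeAt_append.1 hP
    rw [compile, List.length_append, ← add_assoc]
    exact (ih₁ h₁).trans (ih₂ h₂)
  | iteTrue hc _ ih =>
    rw [compile_ite] at hP ⊢
    obtain ⟨-, h₁, -⟩ := hP.condCode
    exact reflTransGen_condCode_then hP (by simp [hc]) (ih h₁)
  | iteFalse hc _ ih =>
    rw [compile_ite] at hP ⊢
    obtain ⟨-, -, -, -, h₂, -⟩ := hP.condCode
    exact reflTransGen_condCode_else hP (by simp [hc]) (ih h₂)
  | whileTrue hc _ _ ihbody ihrest =>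
    refine ReflTransGen.trans ?_ (ihrest hP)
    rw [compile_whileLoop] at hP
    obtain ⟨-, -, hbody, -⟩ := hP.loopCode
    exact reflTransGen_loopCode_iter hP (by simp [hc]) (ihbody hbody)
  | whileFalse hc =>
    rw [compile_whileLoop] at hP ⊢
    exact reflTransGen_loopCode_exit hP (by simp [hc])

theorem compile_correct_general {State : Type*} (s : Stmt State) (σ σ' : State)
    (n : ℕ) (Q R : List (Instr State ℕ))
    (h : BigStep s σ σ') :
    Relation.ReflTransGen (Step (Q ++ (compile s n).1 ++ R))
      (Q.length, σ) (Q.length + (compile s n).1.length, σ') :=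
  h.reflTransGen_compile (codeAt_middle Q _ R)

/-- compiler correctness for terminating programs.  If
`(s, σ) ⇓ σ'`, then executing the code `compile s n` embedded at any position
of a larger program `Q ++ (compile s n).1 ++ R` — provided the labels it
introduces (those in `[n, (compile s n).2)`) are fresh, i.e. occur neither in
`Q` nor in `R` — starting at its first instruction in state `σ` reaches the
instruction following it in state `σ'`. -/
theorem compile_correct {State : Type*} (s : Stmt State) (σ σ' : State)
    (n : ℕ) (Q R : List (Instr State ℕ))
    (hfresh : ∀ l, n ≤ l → l < (compile s n).2 →
      l ∉ labelsOf Q ∧ l ∉ labelsOf R)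
    (h : BigStep s σ σ') :
    Relation.ReflTransGen (Step (Q ++ (compile s n).1 ++ R))
      (Q.length, σ) (Q.length + (compile s n).1.length, σ') :=
  compile_correct_general s σ σ' n Q R h
end

section
/- Struct layout monotonicity and size bound: with the sequential aligned layout of fields (offset of field 1 is 0; offset of field i+1 is align(offset_i + s_i, a_{i+1})), the total struct size align(offset_n + s_n, A) where A = max alignment, satisfies: sum of sizes ≤ total size ≤ sum of sizes + sum over i of (a_i - 1) + (A - 1). In particular layout never wastes more than (a_i − 1) bytes of padding before field i. -/
/-- `align x a` is the least multiple of `a` that is `≥ x` (for `a > 0`). -/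
def align (x a : ℕ) : ℕ := a * ((x + a - 1) / a)

/-- Standard C (System V ABI) sequential field layout: field `0` at offset
`align 0 (a 0) = 0`, field `i+1` at `align (offset i + s i) (a (i+1))`. -/
def offset (s a : ℕ → ℕ) : ℕ → ℕ
  | 0 => align 0 (a 0)
  | i + 1 => align (offset s a i + s i) (a (i + 1))

lemma align_bounds (x a : ℕ) (h : 0 < a) : x ≤ align x a ∧ align x a ≤ x + (a - 1) := by
  have h1 := Nat.div_add_mod (x + a - 1) a
  have h2 := Nat.mod_lt (x + a - 1) h
  unfold align
  set M := a * ((x + a - 1) / a) with hM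
  omega

lemma le_align (x a : ℕ) (h : 0 < a) : x ≤ align x a := (align_bounds x a h).1

lemma align_le (x a : ℕ) (h : 0 < a) : align x a ≤ x + (a - 1) := (align_bounds x a h).2

lemma offset_lower (s a : ℕ → ℕ) (ha : ∀ i, 0 < a i) :
    ∀ i, (∑ j ∈ Finset.range i, s j) ≤ offset s a i := by
  intro i
  induction i with
  | zero => simp
  | succ i ih =>
      rw [Finset.sum_range_succ, offset]
      exact le_trans (by omega) (le_align _ _ (ha (i + 1)))

lemma offset_upper (s a : ℕ → ℕ) (ha : ∀ i, 0 < a i) :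
    ∀ i, offset s a i ≤ (∑ j ∈ Finset.range i, s j) + ∑ j ∈ Finset.range (i + 1), (a j - 1) := by
  intro i
  induction i with
  | zero =>
      simpa [offset] using align_le 0 (a 0) (ha 0)
  | succ i ih =>
      rw [offset, Finset.sum_range_succ s, Finset.sum_range_succ (fun j => a j - 1) (i + 1)]
      have := align_le (offset s a i + s i) (a (i + 1)) (ha (i + 1))
      omega

/-- struct layout monotonicity and size bound.  For `n ≥ 1`
fields with positive sizes `s i` and positive alignments `a i`, and maximum
alignment `A`, the total struct size `align (offset (n-1) + s (n-1)) A`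
satisfies `∑ sᵢ ≤ total ≤ ∑ sᵢ + ∑ (aᵢ - 1) + (A - 1)`; in particular the
layout wastes at most `aᵢ - 1` bytes of padding before field `i`. -/
theorem struct_layout_size_bound (n : ℕ) (hn : 0 < n) (s a : ℕ → ℕ)
    (hs : ∀ i, 0 < s i) (ha : ∀ i, 0 < a i) :
    (∑ i ∈ Finset.range n, s i) ≤
        align (offset s a (n - 1) + s (n - 1)) ((Finset.range n).sup a) ∧
    align (offset s a (n - 1) + s (n - 1)) ((Finset.range n).sup a) ≤
        (∑ i ∈ Finset.range n, s i) +
          (∑ i ∈ Finset.range n, (a i - 1)) + ((Finset.range n).sup a - 1) ∧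
    (∀ i, offset s a (i + 1) ≤ offset s a i + s i + (a (i + 1) - 1)) := by
  obtain ⟨m, rfl⟩ : ∃ m, n = m + 1 := ⟨n - 1, by omega⟩
  have hA : 0 < (Finset.range (m + 1)).sup a :=
    lt_of_lt_of_le (ha 0) (Finset.le_sup (Finset.mem_range.mpr (by omega)))
  simp only [Nat.add_sub_cancel]
  refine ⟨?_, ?_, ?_⟩
  · calc (∑ i ∈ Finset.range (m + 1), s i)
        ≤ offset s a m + s m := by
          rw [Finset.sum_range_succ]
          exact Nat.add_le_add_right (offset_lower s a ha m) _
      _ ≤ _ := le_align _ _ hA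
  · have h1 := align_le (offset s a m + s m) _ hA
    have h2 := offset_upper s a ha m
    rw [Finset.sum_range_succ s] at *
    omega
  · intro i
    rw [offset]
    exact align_le _ _ (ha (i + 1))
end
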